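/- arXiv:2604.20370 — 2 statements merged into one kernel-verified Lean document; each statement's English description precedes it below -/
import Mathlib

section
/- Suppose nonnegative real sequences (E_t) and (Δ_t) satisfy E_t ≤ ρ E_{t−1} + L_x Δ̄ + ε_f for all t ≥ t_0, and Δ_t ≤ ε_gen + L_P E_{t−1} for all t ≥ t_0, where Δ̄ := sup_{t_0 ≤ t ≤ T} Δ_t, with constants ρ ∈ [0,1), L_x, L_P, ε_f, ε_gen ≥ 0. If κ := L_P L_x / (1−ρ) < 1, then Δ̄ ≤ (1/(1−κ)) · (ε_gen + (L_P/(1−ρ)) ε_f + L_P E_{t_0−1}). -/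
/-- arithmetic core of the multi-step forecasting error bound
(Theorem 1 of the paper). -/
theorem multi_step_forecasting_error_bound
    (t0 T : ℕ) (ht0 : 1 ≤ t0) (hT : t0 ≤ T)
    (E Δ : ℕ → ℝ)
    (hEnn : ∀ t, 0 ≤ E t) (hΔnn : ∀ t, 0 ≤ Δ t)
    (ρ Lx LP εf εgen : ℝ)
    (hρ0 : 0 ≤ ρ) (hρ1 : ρ < 1) (hLx : 0 ≤ Lx) (hLP : 0 ≤ LP)
    (hεf : 0 ≤ εf) (hεgen : 0 ≤ εgen)
    (Δbar : ℝ)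
    (hΔbar : Δbar = (Finset.Icc t0 T).sup' (Finset.nonempty_Icc.mpr hT) Δ)
    (hErec : ∀ t : ℕ, t0 ≤ t → E t ≤ ρ * E (t - 1) + Lx * Δbar + εf)
    (hΔrec : ∀ t : ℕ, t0 ≤ t → Δ t ≤ εgen + LP * E (t - 1))
    (κ : ℝ) (hκdef : κ = LP * Lx / (1 - ρ)) (hκ : κ < 1) :
    Δbar ≤ (1 / (1 - κ)) * (εgen + (LP / (1 - ρ)) * εf + LP * E (t0 - 1)) := by
  have h1ρ : (0:ℝ) < 1 - ρ := by linarith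
  have hΔbar0 : 0 ≤ Δbar := by
    rw [hΔbar]
    obtain ⟨a, ha⟩ := Finset.nonempty_Icc.mpr hT
    exact le_trans (hΔnn a) (Finset.le_sup' Δ ha)
  set C : ℝ := Lx * Δbar + εf with hC
  have hC0 : 0 ≤ C := by positivity
  set B : ℝ := E (t0 - 1) + C / (1 - ρ) with hB
  have hEB : ∀ k : ℕ, E (t0 - 1 + k) ≤ B := by
    intro k
    induction k with
    | zero => simp [hB]; positivity
    | succ n ih =>
        have ht : t0 ≤ t0 - 1 + (n + 1) := by omega
        have := hErec (t0 - 1 + (n + 1)) ht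
        have heq : t0 - 1 + (n + 1) - 1 = t0 - 1 + n := by omega
        rw [heq] at this
        have h2 : ρ * E (t0 - 1 + n) ≤ ρ * B := by
          exact mul_le_mul_of_nonneg_left ih hρ0
        have hBrec : ρ * B + C ≤ B := by
          have h3 : ρ * (C / (1 - ρ)) + C = C / (1 - ρ) := by
            field_simp; ring
          have h4 : ρ * E (t0 - 1) ≤ E (t0 - 1) := by
            nlinarith [hEnn (t0 - 1)]
          rw [hB]; nlinarith
        calc E (t0 - 1 + (n + 1)) ≤ ρ * E (t0 - 1 + n) + Lx * Δbar + εf := this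
          _ ≤ ρ * B + C := by rw [hC]; linarith
          _ ≤ B := hBrec
  have hkey : Δbar ≤ εgen + LP * B := by
    rw [hΔbar]
    apply Finset.sup'_le
    intro t ht
    rw [Finset.mem_Icc] at ht
    have := hΔrec t ht.1
    have hprev : E (t - 1) ≤ B := by
      have : t - 1 = t0 - 1 + (t - t0) := by omega
      rw [this]; exact hEB _
    nlinarith
  have h1κ : (0:ℝ) < 1 - κ := by linarith
  rw [hB, hC] at hkey
  have hmain : (1 - κ) * Δbar ≤ εgen + (LP / (1 - ρ)) * εf + LP * E (t0 - 1) := by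
    rw [hκdef]
    have hexp : εgen + LP * (E (t0 - 1) + (Lx * Δbar + εf) / (1 - ρ))
        = (LP * Lx / (1 - ρ)) * Δbar + (εgen + (LP / (1 - ρ)) * εf + LP * E (t0 - 1)) := by
      field_simp; ring
    rw [hexp] at hkey
    linarith
  rw [div_mul_eq_mul_div, one_mul, le_div_iff₀ h1κ]
  nlinarith [hmain]
end

section
/- Let the GRU update map be f(h,x) = (1−z)⊙h + z⊙h̃ with z = σ(W_z x + U_z h + b_z), r = σ(W_r x + U_r h + b_r), h̃ = tanh(W_h x + U_h (r ⊙ h) + b_h). Suppose on a region T we have ‖h‖_∞ ≤ 1, z_i ∈ [z_min, z_max] ⊂ (0,1), and r_i ∈ [0, r_max]. Then the spectral norm of the Jacobian ∂f/∂h at any point of T is at most (1 − z_min) + (1/2)‖U_z‖₂ + z_max ‖U_h‖₂ (r_max + (1/4)‖U_r‖₂). -/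
open Matrix

/-- The logistic sigmoid. -/
noncomputable def sigmoid (u : ℝ) : ℝ := 1 / (1 + Real.exp (-u))


lemma sigmoid_pos (u : ℝ) : 0 < sigmoid u := by
  unfold sigmoid; positivity

lemma sigmoid_lt_one (u : ℝ) : sigmoid u < 1 := by
  unfold sigmoid
  rw [div_lt_one (by positivity)]
  linarith [Real.exp_pos (-u)]

lemma sigmoid_hasDerivAt (u : ℝ) :
    HasDerivAt sigmoid (sigmoid u * (1 - sigmoid u)) u := by
  have h1 : (0:ℝ) < 1 + Real.exp (-u) := by positivity
  have hexp : HasDerivAt (fun u : ℝ => 1 + Real.exp (-u)) (-Real.exp (-u)) u := by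
    simpa using (((hasDerivAt_id u).neg).exp).const_add 1
  have h := hexp.inv h1.ne'
  have heq : (fun u : ℝ => 1 + Real.exp (-u))⁻¹ = sigmoid := by
    funext v; simp [sigmoid, one_div]
  rw [heq] at h
  refine h.congr_deriv ?_
  unfold sigmoid
  field_simp
  ring

lemma sigmoid_deriv_nonneg (u : ℝ) : 0 ≤ sigmoid u * (1 - sigmoid u) := by
  have := sigmoid_pos u; have := sigmoid_lt_one u; nlinarith

lemma sigmoid_deriv_le (u : ℝ) : sigmoid u * (1 - sigmoid u) ≤ 1 / 4 := by
  nlinarith [sq_nonneg (sigmoid u - 1/2)]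

lemma tanh_hasDerivAt (u : ℝ) :
    HasDerivAt Real.tanh (1 - Real.tanh u ^ 2) u := by
  have hc : (0:ℝ) < Real.cosh u := Real.cosh_pos u
  have h : HasDerivAt (fun u : ℝ => Real.sinh u / Real.cosh u)
      ((Real.cosh u * Real.cosh u - Real.sinh u * Real.sinh u) / Real.cosh u ^ 2) u :=
    (Real.hasDerivAt_sinh u).div (Real.hasDerivAt_cosh u) hc.ne'
  have heq : (fun u : ℝ => Real.sinh u / Real.cosh u) = Real.tanh := by
    funext v; rw [Real.tanh_eq_sinh_div_cosh]
  rw [heq] at h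
  convert h using 1
  rw [Real.tanh_eq_sinh_div_cosh]
  have h2 := Real.cosh_sq_sub_sinh_sq u
  field_simp
lemma abs_tanh_le_one (u : ℝ) : |Real.tanh u| ≤ 1 := by
  have hc : (0:ℝ) < Real.cosh u := Real.cosh_pos u
  have h2 := Real.cosh_sq_sub_sinh_sq u
  rw [Real.tanh_eq_sinh_div_cosh, abs_div, abs_of_pos hc, div_le_one hc]
  nlinarith [abs_nonneg (Real.sinh u), sq_abs (Real.sinh u)]

lemma tanh_deriv_nonneg (u : ℝ) : 0 ≤ 1 - Real.tanh u ^ 2 := by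
  nlinarith [abs_tanh_le_one u, sq_abs (Real.tanh u), abs_nonneg (Real.tanh u)]

lemma tanh_deriv_le_one (u : ℝ) : 1 - Real.tanh u ^ 2 ≤ 1 := by nlinarith [sq_nonneg (Real.tanh u)]

lemma sigmoid_differentiable : Differentiable ℝ sigmoid :=
  fun u => (sigmoid_hasDerivAt u).differentiableAt

lemma tanh_differentiable : Differentiable ℝ Real.tanh :=
  fun u => (tanh_hasDerivAt u).differentiableAt

lemma eproj_apply {m : ℕ} (i : Fin m) (x : EuclideanSpace ℝ (Fin m)) :
    (EuclideanSpace.proj (𝕜 := ℝ) i) x = x i := rfl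

lemma toEuclideanCLM_apply_coord {m : ℕ} (A : Matrix (Fin m) (Fin m) ℝ)
    (v : EuclideanSpace ℝ (Fin m)) (i : Fin m) :
    (Matrix.toEuclideanCLM (𝕜 := ℝ) A) v i = A.mulVec v i := by
  have := Matrix.ofLp_toEuclideanCLM (𝕜 := ℝ) A v
  exact congrFun this i

lemma euclid_ptwise {m : ℕ} (M : ℝ) (hM : 0 ≤ M) (u v : EuclideanSpace ℝ (Fin m))
    (h : ∀ i, |u i| ≤ M * |v i|) : ‖u‖ ≤ M * ‖v‖ := by
  rw [EuclideanSpace.norm_eq, EuclideanSpace.norm_eq]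
  have : M * Real.sqrt (∑ i, ‖v i‖ ^ 2) = Real.sqrt (M ^ 2 * ∑ i, ‖v i‖ ^ 2) := by
    rw [Real.sqrt_mul (sq_nonneg M), Real.sqrt_sq hM]
  rw [this, Finset.mul_sum]
  apply Real.sqrt_le_sqrt
  apply Finset.sum_le_sum
  intro i _
  have := h i
  have h1 : ‖u i‖ = |u i| := rfl
  have h2 : ‖v i‖ = |v i| := rfl
  rw [h1, h2]
  nlinarith [abs_nonneg (u i), abs_nonneg (v i)]


/-- Spectral norm of a matrix, viewed as an operator between Euclidean
spaces. -/
noncomputable def specNorm {m : ℕ} (A : Matrix (Fin m) (Fin m) ℝ) : ℝ :=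
  ‖(Matrix.toEuclideanCLM (𝕜 := ℝ) (n := Fin m) A :
    EuclideanSpace ℝ (Fin m) →L[ℝ] EuclideanSpace ℝ (Fin m))‖

/-- GRU update gate. -/
noncomputable def gruZ {m d : ℕ} (Wz : Matrix (Fin m) (Fin d) ℝ)
    (Uz : Matrix (Fin m) (Fin m) ℝ) (bz : Fin m → ℝ)
    (h : Fin m → ℝ) (x : Fin d → ℝ) : Fin m → ℝ :=
  fun i => sigmoid ((Wz.mulVec x + Uz.mulVec h + bz) i)

/-- GRU reset gate. -/
noncomputable def gruR {m d : ℕ} (Wr : Matrix (Fin m) (Fin d) ℝ)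
    (Ur : Matrix (Fin m) (Fin m) ℝ) (br : Fin m → ℝ)
    (h : Fin m → ℝ) (x : Fin d → ℝ) : Fin m → ℝ :=
  fun i => sigmoid ((Wr.mulVec x + Ur.mulVec h + br) i)

/-- GRU candidate state. -/
noncomputable def gruHTilde {m d : ℕ} (Wr Wh : Matrix (Fin m) (Fin d) ℝ)
    (Ur Uh : Matrix (Fin m) (Fin m) ℝ) (br bh : Fin m → ℝ)
    (h : Fin m → ℝ) (x : Fin d → ℝ) : Fin m → ℝ :=
  fun i => Real.tanh
    ((Wh.mulVec x + Uh.mulVec (fun j => gruR Wr Ur br h x j * h j) + bh) i)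

/-- GRU update map `f(h,x) = (1−z)⊙h + z⊙h̃`. -/
noncomputable def gruF {m d : ℕ} (Wz Wr Wh : Matrix (Fin m) (Fin d) ℝ)
    (Uz Ur Uh : Matrix (Fin m) (Fin m) ℝ) (bz br bh : Fin m → ℝ)
    (p : EuclideanSpace ℝ (Fin m) × EuclideanSpace ℝ (Fin d)) :
    EuclideanSpace ℝ (Fin m) :=
  let h : Fin m → ℝ := p.1
  let x : Fin d → ℝ := p.2
  let z := gruZ Wz Uz bz h x
  let ht := gruHTilde Wr Wh Ur Uh br bh h x
  WithLp.toLp 2 (fun i => (1 - z i) * h i + z i * ht i : Fin m → ℝ)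

section Main

variable {m d : ℕ}

/-- The coordinate derivative of the GRU update in the hidden state. -/
noncomputable def gruD
    (Wz Wr Wh : Matrix (Fin m) (Fin d) ℝ)
    (Uz Ur Uh : Matrix (Fin m) (Fin m) ℝ) (bz br bh : Fin m → ℝ)
    (h0 : EuclideanSpace ℝ (Fin m)) (x0 : EuclideanSpace ℝ (Fin d)) (i : Fin m) :
    EuclideanSpace ℝ (Fin m) →L[ℝ] ℝ :=
  ((1 - gruZ Wz Uz bz h0 x0 i) • (EuclideanSpace.proj i : EuclideanSpace ℝ (Fin m) →L[ℝ] ℝ)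
        + ((gruHTilde Wr Wh Ur Uh br bh h0 x0 i - h0 i) *
            (gruZ Wz Uz bz h0 x0 i * (1 - gruZ Wz Uz bz h0 x0 i))) •
          ((EuclideanSpace.proj i).comp (Matrix.toEuclideanCLM (𝕜 := ℝ) Uz))
        + (gruZ Wz Uz bz h0 x0 i *
            (1 - Real.tanh ((Wh.mulVec x0 + Uh.mulVec (fun j => gruR Wr Ur br h0 x0 j * h0 j) + bh) i) ^ 2)) •
          ((EuclideanSpace.proj i).comp
            ((Matrix.toEuclideanCLM (𝕜 := ℝ) Uh).comp
              (Matrix.toEuclideanCLM (𝕜 := ℝ) (Matrix.diagonal (gruR Wr Ur br h0 x0))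
                + (Matrix.toEuclideanCLM (𝕜 := ℝ) (Matrix.diagonal
                    (fun j => h0 j * (gruR Wr Ur br h0 x0 j * (1 - gruR Wr Ur br h0 x0 j))))).comp
                  (Matrix.toEuclideanCLM (𝕜 := ℝ) Ur)))))

/-- Pointwise coordinate derivative pieces. -/
theorem gru_coord_hasFDerivAt
    (Wz Wr Wh : Matrix (Fin m) (Fin d) ℝ)
    (Uz Ur Uh : Matrix (Fin m) (Fin m) ℝ) (bz br bh : Fin m → ℝ)
    (h0 : EuclideanSpace ℝ (Fin m)) (x0 : EuclideanSpace ℝ (Fin d)) (i : Fin m) :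
    HasFDerivAt
      (fun h : EuclideanSpace ℝ (Fin m) =>
        (gruF Wz Wr Wh Uz Ur Uh bz br bh (h, x0) : Fin m → ℝ) i)
      (gruD Wz Wr Wh Uz Ur Uh bz br bh h0 x0 i) h0 := by
  classical
  unfold gruD
  set prj : Fin m → (EuclideanSpace ℝ (Fin m) →L[ℝ] ℝ) := fun j => EuclideanSpace.proj j with hprj
  set CUz := Matrix.toEuclideanCLM (𝕜 := ℝ) Uz with hCUz
  set CUr := Matrix.toEuclideanCLM (𝕜 := ℝ) Ur with hCUr
  set CUh := Matrix.toEuclideanCLM (𝕜 := ℝ) Uh with hCUh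
  set r0 : Fin m → ℝ := gruR Wr Ur br h0 x0 with hr0
  set Kw : EuclideanSpace ℝ (Fin m) →L[ℝ] EuclideanSpace ℝ (Fin m) :=
    Matrix.toEuclideanCLM (𝕜 := ℝ) (Matrix.diagonal r0)
      + (Matrix.toEuclideanCLM (𝕜 := ℝ)
          (Matrix.diagonal (fun j => h0 j * (r0 j * (1 - r0 j))))).comp CUr with hKw
  -- linear pieces
  have hlinz : ∀ (U : Matrix (Fin m) (Fin m) ℝ) (ii : Fin m),
      HasFDerivAt (fun h : EuclideanSpace ℝ (Fin m) => (U.mulVec h : Fin m → ℝ) ii)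
        ((prj ii).comp (Matrix.toEuclideanCLM (𝕜 := ℝ) U)) h0 := by
    intro U ii
    have hlin := ((prj ii).comp (Matrix.toEuclideanCLM (𝕜 := ℝ) U)).hasFDerivAt (x := h0)
    have heq : ⇑((prj ii).comp (Matrix.toEuclideanCLM (𝕜 := ℝ) U))
        = fun h : EuclideanSpace ℝ (Fin m) => (U.mulVec h : Fin m → ℝ) ii := by
      funext h
      simp [hprj, eproj_apply, toEuclideanCLM_apply_coord]
    rwa [heq] at hlin
  -- α = z-gate pre-activation
  have hα : HasFDerivAt (fun h : EuclideanSpace ℝ (Fin m) => ((Wz.mulVec x0 + Uz.mulVec h + bz : Fin m → ℝ)) i)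
      ((prj i).comp CUz) h0 := by
    have h1 := (hlinz Uz i).const_add ((Wz.mulVec x0 : Fin m → ℝ) i)
    have h2 := h1.add_const (bz i)
    exact h2
  have hz : HasFDerivAt (fun h : EuclideanSpace ℝ (Fin m) => sigmoid ((Wz.mulVec x0 + Uz.mulVec h + bz : Fin m → ℝ) i))
      ((gruZ Wz Uz bz h0 x0 i * (1 - gruZ Wz Uz bz h0 x0 i)) • ((prj i).comp CUz)) h0 :=
    (sigmoid_hasDerivAt _).comp_hasFDerivAt h0 hα
  -- reset gate coordinates
  have hβ : ∀ j, HasFDerivAt (fun h : EuclideanSpace ℝ (Fin m) => ((Wr.mulVec x0 + Ur.mulVec h + br : Fin m → ℝ)) j)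
      ((prj j).comp CUr) h0 := by
    intro j
    have h1 := (hlinz Ur j).const_add ((Wr.mulVec x0 : Fin m → ℝ) j)
    have h2 := h1.add_const (br j)
    exact h2
  have hrj : ∀ j, HasFDerivAt
      (fun h : EuclideanSpace ℝ (Fin m) => sigmoid ((Wr.mulVec x0 + Ur.mulVec h + br : Fin m → ℝ) j))
      ((r0 j * (1 - r0 j)) • ((prj j).comp CUr)) h0 := fun j =>
    (sigmoid_hasDerivAt _).comp_hasFDerivAt h0 (hβ j)
  have hid : ∀ j, HasFDerivAt (fun h : EuclideanSpace ℝ (Fin m) => (h : Fin m → ℝ) j) (prj j) h0 := by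
    intro j
    exact (prj j).hasFDerivAt
  have hrh : ∀ j, HasFDerivAt
      (fun h : EuclideanSpace ℝ (Fin m) => sigmoid ((Wr.mulVec x0 + Ur.mulVec h + br : Fin m → ℝ) j) * (h : Fin m → ℝ) j)
      ((prj j).comp Kw) h0 := by
    intro j
    have hm := (hrj j).mul (hid j)
    refine hm.congr_fderiv ?_
    ext v
    simp only [hKw, hprj, ContinuousLinearMap.add_apply, ContinuousLinearMap.comp_apply,
      ContinuousLinearMap.smul_apply, eproj_apply, PiLp.add_apply, toEuclideanCLM_apply_coord,
      Matrix.mulVec_diagonal, smul_eq_mul, hr0, gruR, Pi.add_apply]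
    ring
  -- candidate pre-activation
  have hγ : HasFDerivAt
      (fun h : EuclideanSpace ℝ (Fin m) => ((Wh.mulVec x0 + Uh.mulVec
          (fun j => sigmoid ((Wr.mulVec x0 + Ur.mulVec h + br : Fin m → ℝ) j) * (h : Fin m → ℝ) j)
        + bh : Fin m → ℝ)) i)
      ((prj i).comp (CUh.comp Kw)) h0 := by
    have hsum : HasFDerivAt
        (fun h : EuclideanSpace ℝ (Fin m) => ∑ j, Uh i j *
          (sigmoid ((Wr.mulVec x0 + Ur.mulVec h + br : Fin m → ℝ) j) * (h : Fin m → ℝ) j))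
        (∑ j, Uh i j • ((prj j).comp Kw)) h0 :=
      HasFDerivAt.fun_sum fun j _ => (hrh j).const_mul (Uh i j)
    have hDeq : (∑ j, Uh i j • ((prj j).comp Kw)) = (prj i).comp (CUh.comp Kw) := by
      ext v
      simp only [ContinuousLinearMap.sum_apply, ContinuousLinearMap.smul_apply,
        ContinuousLinearMap.comp_apply, hprj, eproj_apply, hCUh,
        toEuclideanCLM_apply_coord, smul_eq_mul, Matrix.mulVec, dotProduct]
    rw [hDeq] at hsum
    have h1 := hsum.const_add ((Wh.mulVec x0 : Fin m → ℝ) i)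
    have h2 := h1.add_const (bh i)
    have heq : (fun h : EuclideanSpace ℝ (Fin m) => ((Wh.mulVec x0 + Uh.mulVec
          (fun j => sigmoid ((Wr.mulVec x0 + Ur.mulVec h + br : Fin m → ℝ) j) * (h : Fin m → ℝ) j)
        + bh : Fin m → ℝ)) i)
        = fun h : EuclideanSpace ℝ (Fin m) => (Wh.mulVec x0 : Fin m → ℝ) i + (∑ j, Uh i j *
          (sigmoid ((Wr.mulVec x0 + Ur.mulVec h + br : Fin m → ℝ) j) * (h : Fin m → ℝ) j)) + bh i := by
      funext h
      simp [Matrix.mulVec, dotProduct]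
    rw [heq]
    exact h2
  have htanh : HasFDerivAt
      (fun h : EuclideanSpace ℝ (Fin m) => Real.tanh ((Wh.mulVec x0 + Uh.mulVec
          (fun j => sigmoid ((Wr.mulVec x0 + Ur.mulVec h + br : Fin m → ℝ) j) * (h : Fin m → ℝ) j)
        + bh : Fin m → ℝ) i))
      ((1 - Real.tanh ((Wh.mulVec x0 + Uh.mulVec (fun j => gruR Wr Ur br h0 x0 j * h0 j) + bh) i) ^ 2)
        • ((prj i).comp (CUh.comp Kw))) h0 :=
    (tanh_hasDerivAt _).comp_hasFDerivAt h0 hγ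
  -- assemble
  have h1z : HasFDerivAt
      (fun h : EuclideanSpace ℝ (Fin m) => 1 - sigmoid ((Wz.mulVec x0 + Uz.mulVec h + bz : Fin m → ℝ) i))
      (-((gruZ Wz Uz bz h0 x0 i * (1 - gruZ Wz Uz bz h0 x0 i)) • ((prj i).comp CUz))) h0 :=
    hz.const_sub 1
  have hterm1 := h1z.mul (hid i)
  have hterm2 := hz.mul htanh
  have htotal := hterm1.add hterm2
  have hfun : (fun h : EuclideanSpace ℝ (Fin m) =>
        (gruF Wz Wr Wh Uz Ur Uh bz br bh (h, x0) : Fin m → ℝ) i)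
      = fun h : EuclideanSpace ℝ (Fin m) =>
        (1 - sigmoid ((Wz.mulVec x0 + Uz.mulVec h + bz : Fin m → ℝ) i)) * (h : Fin m → ℝ) i +
          sigmoid ((Wz.mulVec x0 + Uz.mulVec h + bz : Fin m → ℝ) i) *
            Real.tanh ((Wh.mulVec x0 + Uh.mulVec
              (fun j => sigmoid ((Wr.mulVec x0 + Ur.mulVec h + br : Fin m → ℝ) j) * (h : Fin m → ℝ) j)
            + bh : Fin m → ℝ) i) := by
    funext h
    simp [gruF, gruZ, gruR, gruHTilde]
  rw [hfun]
  refine htotal.congr_fderiv ?_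
  ext v
  simp only [ContinuousLinearMap.add_apply, ContinuousLinearMap.smul_apply,
    ContinuousLinearMap.comp_apply, ContinuousLinearMap.neg_apply, hprj, eproj_apply,
    PiLp.add_apply, smul_eq_mul, gruZ, gruHTilde, gruR, Pi.add_apply, hr0]
  ring


theorem hasFDerivAt_piLp_euclid {H : Type*} [NormedAddCommGroup H] [NormedSpace ℝ H]
    {n : ℕ} {f : H → EuclideanSpace ℝ (Fin n)} {f' : H →L[ℝ] EuclideanSpace ℝ (Fin n)} {y : H} :
    HasFDerivAt f f' y ↔
      ∀ i, HasFDerivAt (fun x => f x i) ((EuclideanSpace.proj i).comp f') y := by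
  simp only [← hasFDerivWithinAt_univ]
  exact hasFDerivWithinAt_piLp _

theorem gruF_differentiableAt
    (Wz Wr Wh : Matrix (Fin m) (Fin d) ℝ)
    (Uz Ur Uh : Matrix (Fin m) (Fin m) ℝ) (bz br bh : Fin m → ℝ)
    (p : EuclideanSpace ℝ (Fin m) × EuclideanSpace ℝ (Fin d)) :
    DifferentiableAt ℝ (gruF Wz Wr Wh Uz Ur Uh bz br bh) p := by
  classical
  rw [differentiableAt_piLp 2]
  intro i
  have dproj1 : ∀ j, DifferentiableAt ℝ
      (fun q : EuclideanSpace ℝ (Fin m) × EuclideanSpace ℝ (Fin d) => (q.1 : Fin m → ℝ) j) p := by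
    intro j
    exact ((EuclideanSpace.proj (𝕜 := ℝ) j).comp
      (ContinuousLinearMap.fst ℝ (EuclideanSpace ℝ (Fin m))
        (EuclideanSpace ℝ (Fin d)))).differentiableAt (𝕜 := ℝ) (x := p)
  have dproj2 : ∀ j, DifferentiableAt ℝ
      (fun q : EuclideanSpace ℝ (Fin m) × EuclideanSpace ℝ (Fin d) => (q.2 : Fin d → ℝ) j) p := by
    intro j
    exact ((EuclideanSpace.proj (𝕜 := ℝ) j).comp
      (ContinuousLinearMap.snd ℝ (EuclideanSpace ℝ (Fin m))
        (EuclideanSpace ℝ (Fin d)))).differentiableAt (𝕜 := ℝ) (x := p)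
  have dlin : ∀ (W : Matrix (Fin m) (Fin d) ℝ) (U : Matrix (Fin m) (Fin m) ℝ)
      (b : Fin m → ℝ) (j : Fin m), DifferentiableAt ℝ
        (fun q : EuclideanSpace ℝ (Fin m) × EuclideanSpace ℝ (Fin d) =>
          ((W.mulVec (q.2 : Fin d → ℝ) + U.mulVec (q.1 : Fin m → ℝ) + b : Fin m → ℝ)) j) p := by
    intro W U b j
    have heq : (fun q : EuclideanSpace ℝ (Fin m) × EuclideanSpace ℝ (Fin d) =>
        ((W.mulVec (q.2 : Fin d → ℝ) + U.mulVec (q.1 : Fin m → ℝ) + b : Fin m → ℝ)) j)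
        = fun q : EuclideanSpace ℝ (Fin m) × EuclideanSpace ℝ (Fin d) =>
          (∑ k, W j k * (q.2 : Fin d → ℝ) k) + (∑ k, U j k * (q.1 : Fin m → ℝ) k) + b j := by
      funext q
      simp [Matrix.mulVec, dotProduct]
    rw [heq]
    apply DifferentiableAt.add_const
    exact ((DifferentiableAt.fun_sum fun k _ => (dproj2 k).const_mul (W j k)).add
      (DifferentiableAt.fun_sum fun k _ => (dproj1 k).const_mul (U j k)))
  have dsig : ∀ (W : Matrix (Fin m) (Fin d) ℝ) (U : Matrix (Fin m) (Fin m) ℝ)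
      (b : Fin m → ℝ) (j : Fin m), DifferentiableAt ℝ
        (fun q : EuclideanSpace ℝ (Fin m) × EuclideanSpace ℝ (Fin d) =>
          sigmoid ((W.mulVec (q.2 : Fin d → ℝ) + U.mulVec (q.1 : Fin m → ℝ) + b : Fin m → ℝ) j)) p :=
    fun W U b j => (sigmoid_differentiable _).comp p (dlin W U b j)
  have dgam : DifferentiableAt ℝ
      (fun q : EuclideanSpace ℝ (Fin m) × EuclideanSpace ℝ (Fin d) =>
        ((Wh.mulVec (q.2 : Fin d → ℝ) + Uh.mulVec
            (fun j => sigmoid ((Wr.mulVec (q.2 : Fin d → ℝ) + Ur.mulVec (q.1 : Fin m → ℝ) + br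
              : Fin m → ℝ) j) * (q.1 : Fin m → ℝ) j)
          + bh : Fin m → ℝ)) i) p := by
    have heq : (fun q : EuclideanSpace ℝ (Fin m) × EuclideanSpace ℝ (Fin d) =>
        ((Wh.mulVec (q.2 : Fin d → ℝ) + Uh.mulVec
            (fun j => sigmoid ((Wr.mulVec (q.2 : Fin d → ℝ) + Ur.mulVec (q.1 : Fin m → ℝ) + br
              : Fin m → ℝ) j) * (q.1 : Fin m → ℝ) j)
          + bh : Fin m → ℝ)) i)
        = fun q : EuclideanSpace ℝ (Fin m) × EuclideanSpace ℝ (Fin d) =>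
          (∑ k, Wh i k * (q.2 : Fin d → ℝ) k)
            + (∑ j, Uh i j * (sigmoid ((Wr.mulVec (q.2 : Fin d → ℝ)
                + Ur.mulVec (q.1 : Fin m → ℝ) + br : Fin m → ℝ) j) * (q.1 : Fin m → ℝ) j))
            + bh i := by
      funext q
      simp [Matrix.mulVec, dotProduct]
    rw [heq]
    apply DifferentiableAt.add_const
    exact ((DifferentiableAt.fun_sum fun k _ => (dproj2 k).const_mul (Wh i k)).add
      (DifferentiableAt.fun_sum fun j _ =>
        (((dsig Wr Ur br j).mul (dproj1 j)).const_mul (Uh i j))))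
  have dco : DifferentiableAt ℝ
      (fun q : EuclideanSpace ℝ (Fin m) × EuclideanSpace ℝ (Fin d) =>
        (gruF Wz Wr Wh Uz Ur Uh bz br bh q : Fin m → ℝ) i) p := by
    have heq : (fun q : EuclideanSpace ℝ (Fin m) × EuclideanSpace ℝ (Fin d) =>
        (gruF Wz Wr Wh Uz Ur Uh bz br bh q : Fin m → ℝ) i)
        = fun q : EuclideanSpace ℝ (Fin m) × EuclideanSpace ℝ (Fin d) =>
          (1 - sigmoid ((Wz.mulVec (q.2 : Fin d → ℝ) + Uz.mulVec (q.1 : Fin m → ℝ) + bz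
              : Fin m → ℝ) i)) * (q.1 : Fin m → ℝ) i +
            sigmoid ((Wz.mulVec (q.2 : Fin d → ℝ) + Uz.mulVec (q.1 : Fin m → ℝ) + bz
              : Fin m → ℝ) i) *
              Real.tanh ((Wh.mulVec (q.2 : Fin d → ℝ) + Uh.mulVec
                  (fun j => sigmoid ((Wr.mulVec (q.2 : Fin d → ℝ) + Ur.mulVec (q.1 : Fin m → ℝ)
                    + br : Fin m → ℝ) j) * (q.1 : Fin m → ℝ) j)
                + bh : Fin m → ℝ) i) := by
      funext q
      simp [gruF, gruZ, gruR, gruHTilde]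
    rw [heq]
    exact (((dsig Wz Uz bz i).const_sub 1).mul (dproj1 i)).add
      ((dsig Wz Uz bz i).mul ((tanh_differentiable _).comp p dgam))
  exact dco


lemma specNorm_nonneg {n : ℕ} (A : Matrix (Fin n) (Fin n) ℝ) : 0 ≤ specNorm A :=
  norm_nonneg _

lemma specNorm_mulVec_le {n : ℕ} (A : Matrix (Fin n) (Fin n) ℝ)
    (v : EuclideanSpace ℝ (Fin n)) :
    ‖(Matrix.toEuclideanCLM (𝕜 := ℝ) A) v‖ ≤ specNorm A * ‖v‖ :=
  (Matrix.toEuclideanCLM (𝕜 := ℝ) A).le_opNorm v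

/-- spectral-norm bound on the GRU Jacobian with respect to
the hidden state. -/
theorem gru_jacobian_h_bound {m d : ℕ}
    (Wz Wr Wh : Matrix (Fin m) (Fin d) ℝ)
    (Uz Ur Uh : Matrix (Fin m) (Fin m) ℝ) (bz br bh : Fin m → ℝ)
    (T : Set (EuclideanSpace ℝ (Fin m) × EuclideanSpace ℝ (Fin d)))
    (zmin zmax rmax : ℝ) (hzmin : 0 < zmin) (hzmax : zmax < 1)
    (hzz : zmin ≤ zmax) (hrmax : 0 ≤ rmax)
    (hhbound : ∀ p ∈ T, ∀ i, |(p.1 : Fin m → ℝ) i| ≤ 1)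
    (hzrange : ∀ p ∈ T, ∀ i,
      zmin ≤ gruZ Wz Uz bz (p.1 : Fin m → ℝ) (p.2 : Fin d → ℝ) i ∧
        gruZ Wz Uz bz (p.1 : Fin m → ℝ) (p.2 : Fin d → ℝ) i ≤ zmax)
    (hrrange : ∀ p ∈ T, ∀ i,
      gruR Wr Ur br (p.1 : Fin m → ℝ) (p.2 : Fin d → ℝ) i ≤ rmax) :
    ∀ p ∈ T,
      ‖(fderiv ℝ (gruF Wz Wr Wh Uz Ur Uh bz br bh) p).comp
        (ContinuousLinearMap.inl ℝ (EuclideanSpace ℝ (Fin m))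
          (EuclideanSpace ℝ (Fin d)))‖ ≤
        (1 - zmin) + (1 / 2) * specNorm Uz +
          zmax * specNorm Uh * (rmax + (1 / 4) * specNorm Ur) := by
  classical
  rintro ⟨h0, x0⟩ hp
  -- basic nonnegativity facts
  have hsUz := specNorm_nonneg Uz
  have hsUr := specNorm_nonneg Ur
  have hsUh := specNorm_nonneg Uh
  have hzmax0 : 0 ≤ zmax := le_of_lt (lt_of_lt_of_le hzmin hzz)
  -- the explicit derivative
  set L : EuclideanSpace ℝ (Fin m) →L[ℝ] EuclideanSpace ℝ (Fin m) :=
    ((PiLp.continuousLinearEquiv 2 ℝ (fun _ : Fin m => ℝ)).symm :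
        (Fin m → ℝ) →L[ℝ] EuclideanSpace ℝ (Fin m)).comp
      (ContinuousLinearMap.pi (gruD Wz Wr Wh Uz Ur Uh bz br bh h0 x0)) with hL
  have hLco : ∀ (i : Fin m) (v : EuclideanSpace ℝ (Fin m)),
      (L v : Fin m → ℝ) i = gruD Wz Wr Wh Uz Ur Uh bz br bh h0 x0 i v := fun i v => rfl
  -- L is the derivative of h ↦ gruF (h, x0)
  have hgE : HasFDerivAt (fun h : EuclideanSpace ℝ (Fin m) =>
      gruF Wz Wr Wh Uz Ur Uh bz br bh (h, x0)) L h0 := by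
    rw [hasFDerivAt_piLp_euclid]
    intro i
    refine (gru_coord_hasFDerivAt Wz Wr Wh Uz Ur Uh bz br bh h0 x0 i).congr_fderiv ?_
    ext v
    rfl
  -- relate with the partial fderiv
  have hdiff := gruF_differentiableAt Wz Wr Wh Uz Ur Uh bz br bh (h0, x0)
  have hinl : HasFDerivAt (fun h : EuclideanSpace ℝ (Fin m) => (h, x0))
      (ContinuousLinearMap.inl ℝ (EuclideanSpace ℝ (Fin m)) (EuclideanSpace ℝ (Fin d))) h0 :=
    hasFDerivAt_prodMk_left h0 x0
  have hcomp := (hdiff.hasFDerivAt).comp h0 hinl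
  have hEq : (fderiv ℝ (gruF Wz Wr Wh Uz Ur Uh bz br bh) (h0, x0)).comp
      (ContinuousLinearMap.inl ℝ (EuclideanSpace ℝ (Fin m)) (EuclideanSpace ℝ (Fin d))) = L :=
    hcomp.unique hgE
  rw [hEq]
  -- pointwise quantities and their ranges
  have hzr := fun i => hzrange (h0, x0) hp i
  have hrr := fun i => hrrange (h0, x0) hp i
  have hhb := fun i => hhbound (h0, x0) hp i
  -- bound the operator norm
  have hB0 : 0 ≤ (1 - zmin) + (1 / 2) * specNorm Uz +
      zmax * specNorm Uh * (rmax + (1 / 4) * specNorm Ur) := by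
    have h1 : (0:ℝ) ≤ 1 - zmin := by linarith
    have h2 : (0:ℝ) ≤ zmax * specNorm Uh * (rmax + (1 / 4) * specNorm Ur) := by positivity
    positivity
  refine ContinuousLinearMap.opNorm_le_bound _ hB0 fun v => ?_
  -- decompose L v into three pieces
  set z0 : Fin m → ℝ := gruZ Wz Uz bz h0 x0 with hz0
  set r0 : Fin m → ℝ := gruR Wr Ur br h0 x0 with hr0
  set ht0 : Fin m → ℝ := gruHTilde Wr Wh Ur Uh br bh h0 x0 with hht0
  set tcv : Fin m → ℝ := fun i => 1 - Real.tanh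
      ((Wh.mulVec x0 + Uh.mulVec (fun j => gruR Wr Ur br h0 x0 j * h0 j) + bh) i) ^ 2 with htcv
  set Urv : EuclideanSpace ℝ (Fin m) := (Matrix.toEuclideanCLM (𝕜 := ℝ) Ur) v with hUrv
  set W1 : EuclideanSpace ℝ (Fin m) :=
    (Matrix.toEuclideanCLM (𝕜 := ℝ) (Matrix.diagonal r0)) v with hW1
  set W2 : EuclideanSpace ℝ (Fin m) :=
    (Matrix.toEuclideanCLM (𝕜 := ℝ)
      (Matrix.diagonal (fun j => h0 j * (r0 j * (1 - r0 j))))) Urv with hW2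
  set Kwv : EuclideanSpace ℝ (Fin m) := W1 + W2 with hKwv
  set Uzv : EuclideanSpace ℝ (Fin m) := (Matrix.toEuclideanCLM (𝕜 := ℝ) Uz) v with hUzv
  set Uhw : EuclideanSpace ℝ (Fin m) := (Matrix.toEuclideanCLM (𝕜 := ℝ) Uh) Kwv with hUhw
  set T1 : EuclideanSpace ℝ (Fin m) := WithLp.toLp 2 (fun i => (1 - z0 i) * v i : Fin m → ℝ) with hT1
  set T2 : EuclideanSpace ℝ (Fin m) :=
    WithLp.toLp 2 (fun i => ((ht0 i - h0 i) * (z0 i * (1 - z0 i))) * Uzv i : Fin m → ℝ) with hT2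
  set T3 : EuclideanSpace ℝ (Fin m) :=
    WithLp.toLp 2 (fun i => (z0 i * tcv i) * Uhw i : Fin m → ℝ) with hT3
  have hsplit : L v = T1 + T2 + T3 := by
    ext i
    have h1 := hLco i v
    rw [show ((T1 + T2 + T3 : EuclideanSpace ℝ (Fin m)) : Fin m → ℝ) i
        = T1 i + T2 i + T3 i from rfl, h1]
    simp only [gruD, ContinuousLinearMap.add_apply, ContinuousLinearMap.smul_apply,
      ContinuousLinearMap.comp_apply, eproj_apply, smul_eq_mul, hT1, hT2, hT3,
      hz0, hr0, hht0, htcv, hUzv, hUrv, hUhw, hKwv, hW1, hW2]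
  -- range facts
  have hz0r : ∀ i, zmin ≤ z0 i ∧ z0 i ≤ zmax := hzr
  have hr0r : ∀ i, 0 ≤ r0 i ∧ r0 i ≤ rmax := fun i => ⟨le_of_lt (sigmoid_pos _), hrr i⟩
  have hsz : ∀ i, 0 ≤ z0 i * (1 - z0 i) ∧ z0 i * (1 - z0 i) ≤ 1 / 4 := fun i =>
    ⟨sigmoid_deriv_nonneg _, sigmoid_deriv_le _⟩
  have hsr : ∀ i, 0 ≤ r0 i * (1 - r0 i) ∧ r0 i * (1 - r0 i) ≤ 1 / 4 := fun i =>
    ⟨sigmoid_deriv_nonneg _, sigmoid_deriv_le _⟩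
  have htc : ∀ i, 0 ≤ tcv i ∧ tcv i ≤ 1 := fun i => ⟨tanh_deriv_nonneg _, tanh_deriv_le_one _⟩
  have hht : ∀ i, |ht0 i| ≤ 1 := fun i => abs_tanh_le_one _
  -- norm bounds on the pieces
  have hT1n : ‖T1‖ ≤ (1 - zmin) * ‖v‖ := by
    refine euclid_ptwise _ (by linarith) _ _ fun i => ?_
    have h1 := (hz0r i).1
    have h2 := (hz0r i).2
    have : |(T1 : Fin m → ℝ) i| = (1 - z0 i) * |v i| := by
      rw [hT1]
      rw [abs_mul, abs_of_nonneg (by linarith : (0:ℝ) ≤ 1 - z0 i)]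
    rw [this]
    exact mul_le_mul_of_nonneg_right (by linarith) (abs_nonneg _)
  have hT2n : ‖T2‖ ≤ (1 / 2) * ‖Uzv‖ := by
    refine euclid_ptwise _ (by norm_num) _ _ fun i => ?_
    have h1 := hht i
    have h2 := hhb i
    have h3 := (hsz i).1
    have h4 := (hsz i).2
    have : |(T2 : Fin m → ℝ) i| = |(ht0 i - h0 i) * (z0 i * (1 - z0 i))| * |Uzv i| := by
      rw [hT2, abs_mul]
    rw [this]
    refine mul_le_mul_of_nonneg_right ?_ (abs_nonneg _)
    rw [abs_mul, abs_of_nonneg h3]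
    have h5 : |ht0 i - h0 i| ≤ 2 := by
      calc |ht0 i - h0 i| ≤ |ht0 i| + |h0 i| := abs_sub _ _
        _ ≤ 2 := by linarith
    have h6 := mul_le_mul h5 h4 h3 (by norm_num : (0:ℝ) ≤ 2)
    linarith
  have hT3n : ‖T3‖ ≤ zmax * ‖Uhw‖ := by
    refine euclid_ptwise _ hzmax0 _ _ fun i => ?_
    have h1 := (hz0r i).1
    have h2 := (hz0r i).2
    have h3 := (htc i).1
    have h4 := (htc i).2
    have : |(T3 : Fin m → ℝ) i| = |z0 i * tcv i| * |Uhw i| := by rw [hT3, abs_mul]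
    rw [this]
    refine mul_le_mul_of_nonneg_right ?_ (abs_nonneg _)
    rw [abs_mul, abs_of_nonneg (by linarith : (0:ℝ) ≤ z0 i), abs_of_nonneg h3]
    have h6 := mul_le_mul h2 h4 h3 hzmax0
    linarith
  have hW1n : ‖W1‖ ≤ rmax * ‖v‖ := by
    refine euclid_ptwise _ hrmax _ _ fun i => ?_
    have : |(W1 : Fin m → ℝ) i| = |r0 i| * |v i| := by
      rw [hW1, toEuclideanCLM_apply_coord, Matrix.mulVec_diagonal, abs_mul]
    rw [this]
    refine mul_le_mul_of_nonneg_right ?_ (abs_nonneg _)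
    rw [abs_of_nonneg (hr0r i).1]
    exact (hr0r i).2
  have hW2n : ‖W2‖ ≤ (1 / 4) * ‖Urv‖ := by
    refine euclid_ptwise _ (by norm_num) _ _ fun i => ?_
    have : |(W2 : Fin m → ℝ) i| = |h0 i * (r0 i * (1 - r0 i))| * |Urv i| := by
      rw [hW2, toEuclideanCLM_apply_coord, Matrix.mulVec_diagonal, abs_mul]
    rw [this]
    refine mul_le_mul_of_nonneg_right ?_ (abs_nonneg _)
    rw [abs_mul, abs_of_nonneg (hsr i).1]
    have h1 := hhb i
    have h2 := (hsr i).1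
    have h3 := (hsr i).2
    have h6 := mul_le_mul h1 h3 h2 (by norm_num : (0:ℝ) ≤ 1)
    linarith
  have hUrvn : ‖Urv‖ ≤ specNorm Ur * ‖v‖ := specNorm_mulVec_le Ur v
  have hUzvn : ‖Uzv‖ ≤ specNorm Uz * ‖v‖ := specNorm_mulVec_le Uz v
  have hKwvn : ‖Kwv‖ ≤ (rmax + (1 / 4) * specNorm Ur) * ‖v‖ := by
    calc ‖Kwv‖ ≤ ‖W1‖ + ‖W2‖ := norm_add_le _ _
      _ ≤ rmax * ‖v‖ + (1 / 4) * ‖Urv‖ := by linarith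
      _ ≤ rmax * ‖v‖ + (1 / 4) * (specNorm Ur * ‖v‖) := by linarith
      _ = (rmax + (1 / 4) * specNorm Ur) * ‖v‖ := by ring
  have hUhwn : ‖Uhw‖ ≤ specNorm Uh * ((rmax + (1 / 4) * specNorm Ur) * ‖v‖) := by
    calc ‖Uhw‖ ≤ specNorm Uh * ‖Kwv‖ := specNorm_mulVec_le Uh Kwv
      _ ≤ specNorm Uh * ((rmax + (1 / 4) * specNorm Ur) * ‖v‖) :=
        mul_le_mul_of_nonneg_left hKwvn hsUh
  have hT3n' : ‖T3‖ ≤ zmax * (specNorm Uh * ((rmax + (1 / 4) * specNorm Ur) * ‖v‖)) := by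
    calc ‖T3‖ ≤ zmax * ‖Uhw‖ := hT3n
      _ ≤ zmax * (specNorm Uh * ((rmax + (1 / 4) * specNorm Ur) * ‖v‖)) :=
        mul_le_mul_of_nonneg_left hUhwn hzmax0
  calc ‖L v‖ = ‖T1 + T2 + T3‖ := by rw [hsplit]
    _ ≤ ‖T1‖ + ‖T2‖ + ‖T3‖ :=
      le_trans (norm_add_le _ _) (by linarith [norm_add_le T1 T2])
    _ ≤ (1 - zmin) * ‖v‖ + (1 / 2) * (specNorm Uz * ‖v‖)
        + zmax * (specNorm Uh * ((rmax + (1 / 4) * specNorm Ur) * ‖v‖)) := by linarith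
    _ = ((1 - zmin) + (1 / 2) * specNorm Uz +
        zmax * specNorm Uh * (rmax + (1 / 4) * specNorm Ur)) * ‖v‖ := by ring

end Main
end
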